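/- arXiv:1612.03841 — 5 statements merged into one kernel-verified Lean document; each statement's English description precedes it below -/
import Mathlib

section
/- Suppose a length-n code has availability 2 with symmetric recovery sets, where for each j ∈ {1,2} the blocks B_{i,j} := A_{i,j} ∪ {i} form a partition of [n], and distinct recovery sets of a fixed position intersect only in that position, i.e., B_{i,1} ∩ B_{i,2} = {i}. Then any 3 erased positions can be ordered so that each can be recovered in turn: for any distinct positions p1, p2, p3, there exists a position p ∈ {p1,p2,p3} and j ∈ {1,2} such that B_{p,j} contains none of the other two erased positions. -/
/-- Availability 2 with symmetric recovery sets suffices to locally recover any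
3 erasures: given two partitions of `Fin n` (encoded by the block map `B`, where
`B i j` is the block of the `j`-th partition containing `i`) whose blocks through
a common point intersect only in that point, for any 3-element erased set `E`
there is an erased position `p` and an index `j` such that the block `B p j`
contains no other erased position. -/
theorem stmt_1 (n : ℕ) (B : Fin n → Fin 2 → Finset (Fin n))
    (hmem : ∀ i j, i ∈ B i j)
    (hblock : ∀ i j k, k ∈ B i j → B k j = B i j)
    (hdisj : ∀ i, B i 0 ∩ B i 1 = {i})
    (p1 p2 p3 : Fin n) (h12 : p1 ≠ p2) (h13 : p1 ≠ p3) (h23 : p2 ≠ p3) :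
    ∃ p ∈ ({p1, p2, p3} : Finset (Fin n)), ∃ j : Fin 2,
      B p j ∩ ({p1, p2, p3} : Finset (Fin n)) = {p} := by
  set E : Finset (Fin n) := {p1, p2, p3} with hE
  by_contra h
  push_neg at h
  -- For each p ∈ E and j, the block B p j contains another erased point.
  have aux : ∀ p ∈ E, ∀ j : Fin 2, ∃ q ∈ E, q ≠ p ∧ q ∈ B p j := by
    intro p hp j
    have hne := h p hp j
    have hsub : ({p} : Finset (Fin n)) ⊆ B p j ∩ E := by
      simp [Finset.singleton_subset_iff, hmem, hp]
    have hss : ({p} : Finset (Fin n)) ⊂ B p j ∩ E :=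
      hsub.ssubset_of_ne (by intro hh; exact hne hh.symm)
    obtain ⟨q, hq, hqne⟩ := Finset.exists_of_ssubset hss
    rw [Finset.mem_inter] at hq
    exact ⟨q, hq.2, by simpa using hqne, hq.1⟩
  have hp1 : p1 ∈ E := by simp [hE]
  have hp2 : p2 ∈ E := by simp [hE]
  have hp3 : p3 ∈ E := by simp [hE]
  -- For each j, all three erased points lie in the same block B p1 j.
  have key : ∀ j : Fin 2, p2 ∈ B p1 j ∧ p3 ∈ B p1 j := by
    intro j
    obtain ⟨q, hqE, hqne, hqB⟩ := aux p1 hp1 j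
    have hq' : q = p2 ∨ q = p3 := by
      rcases Finset.mem_insert.1 hqE with h' | h'
      · exact absurd h' hqne
      · simpa using h'
    rcases hq' with hq | hq
    · refine ⟨hq ▸ hqB, ?_⟩
      obtain ⟨r, hrE, hrne, hrB⟩ := aux p3 hp3 j
      have hr' : r = p1 ∨ r = p2 := by
        rcases Finset.mem_insert.1 hrE with h' | h'
        · exact Or.inl h'
        · rcases Finset.mem_insert.1 h' with h'' | h''
          · exact Or.inr h''
          · exact absurd (by simpa using h'') hrne
      rcases hr' with hr | hr
      · have e1 := hblock p3 j p1 (hr ▸ hrB)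
        rw [e1]; exact hmem p3 j
      · have e1 := hblock p3 j p2 (hr ▸ hrB)
        have e2 := hblock p1 j p2 (hq ▸ hqB)
        rw [← e2, e1]; exact hmem p3 j
    · refine ⟨?_, hq ▸ hqB⟩
      obtain ⟨r, hrE, hrne, hrB⟩ := aux p2 hp2 j
      have hr' : r = p1 ∨ r = p3 := by
        rcases Finset.mem_insert.1 hrE with h' | h'
        · exact Or.inl h'
        · rcases Finset.mem_insert.1 h' with h'' | h''
          · exact absurd h'' hrne
          · exact Or.inr (by simpa using h'')
      rcases hr' with hr | hr
      · have e1 := hblock p2 j p1 (hr ▸ hrB)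
        rw [e1]; exact hmem p2 j
      · have e1 := hblock p2 j p3 (hr ▸ hrB)
        have e2 := hblock p1 j p3 (hq ▸ hqB)
        rw [← e2, e1]; exact hmem p2 j
  have h0 := (key 0).1
  have h1 := (key 1).1
  have : p2 ∈ B p1 0 ∩ B p1 1 := Finset.mem_inter.2 ⟨h0, h1⟩
  rw [hdisj p1] at this
  exact h12 (Finset.mem_singleton.1 this).symm
end

section
/- There exists a configuration of three partitions of a finite set and a 4-element subset E such that for every p ∈ E and every partition index j ∈ {1,2,3}, the block of the j-th partition containing p meets E \ {p}. Hence availability 3 with symmetric recovery sets does not suffice to locally recover every pattern of 4 erasures. -/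
/-- Availability 3 with symmetric recovery sets does not suffice to locally
recover every pattern of 4 erasures: there is a finite set `Fin n` with three
partitions (encoded by the block map `B`, satisfying the usual partition axioms,
blocks of size at least 2, and distinct blocks through a point meeting only in
that point) and a 4-element subset `E` such that for every `p ∈ E` and every
partition index `j`, the block `B p j` meets `E \ {p}`. -/
theorem stmt_2 : ∃ (n : ℕ) (B : Fin n → Fin 3 → Finset (Fin n)),
    (∀ i j, i ∈ B i j) ∧
    (∀ i j k, k ∈ B i j → B k j = B i j) ∧
    (∀ i j, 2 ≤ (B i j).card) ∧
    (∀ i, ∀ j k : Fin 3, j ≠ k → B i j ∩ B i k = {i}) ∧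
    ∃ E : Finset (Fin n), E.card = 4 ∧
      ∀ p ∈ E, ∀ j : Fin 3, (B p j ∩ E.erase p).Nonempty := by
  refine ⟨4, fun i j => {i, ⟨i.val ^^^ (j.val + 1), Nat.xor_lt_two_pow (n := 2) i.2 (by omega)⟩}, ?_, ?_, ?_, ?_,
    Finset.univ, ?_, ?_⟩ <;> decide
end

section
/- Let q = p^{2h} with p prime, and let a ∈ F_q be a nonzero element with a^{p^h} + a = 0. Then the affine Artin-Schreier curve y^p − y = a·x^{p^h + 1} has exactly p·q solutions (x, y) ∈ F_q × F_q. -/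
open Finset Polynomial

/-- Over `F = 𝔽_q` with `q = p^(2h)`, for `a ≠ 0` with `a^(p^h) + a = 0`, the affine
Artin–Schreier curve `y^p - y = a·x^(p^h+1)` has exactly `p·q` rational points. -/
theorem stmt_6 (p h : ℕ) (hp : p.Prime) (hh : 1 ≤ h)
    (F : Type*) [Field F] [Fintype F] [DecidableEq F]
    (hcard : Fintype.card F = p ^ (2 * h))
    (a : F) (ha : a ≠ 0) (haeq : a ^ p ^ h + a = 0) :
    Fintype.card {xy : F × F // xy.2 ^ p - xy.2 = a * xy.1 ^ (p ^ h + 1)}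
      = p * p ^ (2 * h) := by
  haveI : Fact p.Prime := ⟨hp⟩
  -- characteristic is p
  obtain ⟨c, hc⟩ := CharP.exists F
  haveI := hc
  have hcp : c.Prime := CharP.char_is_prime F c
  have hdvd : c ∣ p ^ (2 * h) := by
    rw [← CharP.cast_eq_zero_iff F c, ← hcard, Nat.cast_card_eq_zero]
  have hcpeq : c = p := (Nat.prime_dvd_prime_iff_eq hcp hp).mp (hcp.dvd_of_dvd_pow hdvd)
  rw [hcpeq] at hc
  haveI : CharP F p := hc
  have hp1 : 1 < p := hp.one_lt
  have hpow_card : ∀ z : F, z ^ p ^ (2 * h) = z := by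
    intro z; rw [← hcard]; exact FiniteField.pow_card z
  classical
  -- fibers of the Artin-Schreier map
  set K : Finset F := univ.filter (fun y => y ^ p - y = 0) with hK
  have fiber_card : ∀ b y₀ : F, y₀ ^ p - y₀ = b →
      (univ.filter (fun y : F => y ^ p - y = b)).card = K.card := by
    intro b y₀ hy₀
    apply Finset.card_bij' (fun y _ => y - y₀) (fun y _ => y + y₀)
    · intro y hy
      simp only [hK, mem_filter, mem_univ, true_and] at hy ⊢
      rw [sub_pow_char]
      linear_combination hy - hy₀
    · intro y hy
      simp only [hK, mem_filter, mem_univ, true_and] at hy ⊢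
      rw [add_pow_char]
      linear_combination hy + hy₀
    · intro y _; ring
    · intro y _; ring
  -- |K| = p
  have hKcard : K.card = p := by
    have hub : K.card ≤ p := by
      set g : F[X] := X ^ p - X with hg
      have hdeg : g.natDegree = p := by
        rw [hg, natDegree_sub_eq_left_of_natDegree_lt, natDegree_X_pow]
        rw [natDegree_X, natDegree_X_pow]; exact hp1
      have hg0 : g ≠ 0 := by
        intro h0; rw [h0, natDegree_zero] at hdeg; omega
      have hsub : K ⊆ g.roots.toFinset := by
        intro y hy
        simp only [hK, mem_filter, mem_univ, true_and] at hy
        rw [Multiset.mem_toFinset, mem_roots hg0]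
        simp [hg, IsRoot, hy]
      calc K.card ≤ g.roots.toFinset.card := Finset.card_le_card hsub
        _ ≤ Multiset.card g.roots := Multiset.toFinset_card_le _
        _ ≤ g.natDegree := card_roots' g
        _ = p := hdeg
    have hlb : p ≤ K.card := by
      have hinj : Function.Injective (ZMod.castHom dvd_rfl F) :=
        RingHom.injective (ZMod.castHom (dvd_refl p) F)
      have himg : (univ : Finset (ZMod p)).image (ZMod.castHom dvd_rfl F) ⊆ K := by
        intro y hy
        simp only [mem_image, mem_univ, true_and] at hy
        obtain ⟨z, rfl⟩ := hy
        simp only [hK, mem_filter, mem_univ, true_and]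
        rw [← map_pow, ZMod.pow_card, sub_self]
      calc p = (univ : Finset (ZMod p)).card := by simp [ZMod.card]
        _ = ((univ : Finset (ZMod p)).image (ZMod.castHom dvd_rfl F)).card :=
            (Finset.card_image_of_injective _ hinj).symm
        _ ≤ K.card := Finset.card_le_card himg
    omega
  -- image of the Artin-Schreier map
  set I : Finset F := univ.image (fun y : F => y ^ p - y) with hI
  have hqI : p ^ (2 * h) = I.card * p := by
    have := Finset.card_eq_sum_card_image (fun y : F => y ^ p - y) (univ : Finset F)
    rw [card_univ, hcard] at this
    rw [this, ← hI]
    rw [Finset.sum_congr rfl (fun b hb => ?_), Finset.sum_const, smul_eq_mul]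
    simp only [hI, mem_image, mem_univ, true_and] at hb
    obtain ⟨y₀, hy₀⟩ := hb
    rw [fiber_card b y₀ hy₀, hKcard]
  have hIcard : I.card = p ^ (2 * h - 1) := by
    have : p ^ (2 * h) = p ^ (2 * h - 1) * p := by
      rw [← pow_succ]; congr 1; omega
    rw [this] at hqI
    exact Nat.eq_of_mul_eq_mul_right hp.pos hqI.symm
  -- kernel of trace
  set T : Finset F := univ.filter (fun z => ∑ i ∈ range (2 * h), z ^ p ^ i = 0) with hT
  have hIT : I ⊆ T := by
    intro b hb
    simp only [hI, mem_image, mem_univ, true_and] at hb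
    obtain ⟨y, rfl⟩ := hb
    simp only [hT, mem_filter, mem_univ, true_and]
    have : ∀ i, (y ^ p - y) ^ p ^ i = y ^ p ^ (i + 1) - y ^ p ^ i := by
      intro i
      rw [sub_pow_char_pow, ← pow_mul, ← pow_succ']
    rw [Finset.sum_congr rfl (fun i _ => this i), Finset.sum_range_sub (fun i => y ^ p ^ i),
      hpow_card, pow_zero, pow_one, sub_self]
  have hTcard : T.card ≤ p ^ (2 * h - 1) := by
    set g : F[X] := ∑ i ∈ range (2 * h), X ^ p ^ i with hg
    have hg0 : g ≠ 0 := by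
      intro h0
      have : g.coeff 1 = 1 := by
        rw [hg, finset_sum_coeff]
        rw [Finset.sum_eq_single 0]
        · simp
        · intro i _ hi
          rw [coeff_X_pow, if_neg]
          have : p ^ i ≥ p := Nat.le_self_pow hi p |>.trans_eq rfl
          have : 1 < p ^ i := lt_of_lt_of_le hp1 (Nat.le_self_pow hi p)
          omega
        · intro habs; exact absurd (mem_range.mpr (by omega)) habs
      rw [h0, coeff_zero] at this
      exact one_ne_zero this.symm
    have hdeg : g.natDegree ≤ p ^ (2 * h - 1) := by
      apply natDegree_sum_le_of_forall_le
      intro i hi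
      rw [natDegree_X_pow]
      exact Nat.pow_le_pow_right hp.pos (by simp at hi; omega)
    have hsub : T ⊆ g.roots.toFinset := by
      intro z hz
      simp only [hT, mem_filter, mem_univ, true_and] at hz
      rw [Multiset.mem_toFinset, mem_roots hg0]
      simp [hg, IsRoot, eval_finset_sum, hz]
    calc T.card ≤ g.roots.toFinset.card := Finset.card_le_card hsub
      _ ≤ Multiset.card g.roots := Multiset.toFinset_card_le _
      _ ≤ g.natDegree := card_roots' g
      _ ≤ p ^ (2 * h - 1) := hdeg
  have hTI : T = I := (Finset.eq_of_subset_of_card_le hIT (hIcard ▸ hTcard)).symm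
  -- a * x^(p^h+1) is in T for every x
  have hmemT : ∀ x : F, a * x ^ (p ^ h + 1) ∈ T := by
    intro x
    set cx := a * x ^ (p ^ h + 1) with hcx
    have hane : a ^ p ^ h = -a := eq_neg_of_add_eq_zero_left haeq
    have hkey : cx ^ p ^ h = -cx := by
      rw [hcx, mul_pow, hane, ← pow_mul]
      have hxp : x ^ ((p ^ h + 1) * p ^ h) = x ^ (p ^ h + 1) := by
        have : (p ^ h + 1) * p ^ h = p ^ (2 * h) + p ^ h := by
          rw [add_mul, one_mul, ← pow_add]; congr 2; omega
        rw [this, pow_add, hpow_card, mul_comm, ← pow_succ]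
      rw [hxp]; ring
    simp only [hT, mem_filter, mem_univ, true_and]
    have h2h : 2 * h = h + h := by omega
    rw [h2h, Finset.sum_range_add]
    have : ∀ i, cx ^ p ^ (h + i) = -(cx ^ p ^ i) := by
      intro i
      rw [pow_add, pow_mul, hkey]
      rw [show (-cx) = 0 - cx by ring, sub_pow_char_pow, zero_pow (pow_ne_zero i hp.ne_zero),
        zero_sub]
    rw [Finset.sum_congr rfl (fun i _ => this i), Finset.sum_neg_distrib, add_neg_cancel]
  -- final count
  have hEquiv := Equiv.subtypeProdEquivSigmaSubtype
    (fun (x : F) (y : F) => y ^ p - y = a * x ^ (p ^ h + 1))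
  rw [Fintype.card_congr hEquiv, Fintype.card_sigma]
  have : ∀ x : F, Fintype.card {y : F // y ^ p - y = a * x ^ (p ^ h + 1)} = p := by
    intro x
    have hx := hmemT x
    rw [hTI] at hx
    simp only [hI, mem_image, mem_univ, true_and] at hx
    obtain ⟨y₀, hy₀⟩ := hx
    rw [Fintype.card_subtype, fiber_card _ y₀ hy₀, hKcard]
  rw [Finset.sum_congr rfl (fun x _ => this x), Finset.sum_const, smul_eq_mul, card_univ, hcard,
    mul_comm]
end

section
/- Let q = p^{2h}, and let a_1, ..., a_t ∈ F_q be F_p-linearly independent elements satisfying a_i^{p^h} + a_i = 0, with 1 ≤ t ≤ h. Then the system of equations y_i^p − y_i = a_i·x^{p^h+1} for i = 1,...,t has exactly p^t·q solutions (x, y_1, ..., y_t) ∈ F_q^{t+1}. -/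
open Finset Polynomial

/-- If every element of a finset is a root of a nonzero polynomial, the
cardinality of the finset is at most the degree. -/
lemma finset_card_le_natDegree {F : Type*} [Field F] [DecidableEq F] {g : F[X]} (hg : g ≠ 0)
    {s : Finset F} (hs : ∀ x ∈ s, g.IsRoot x) : s.card ≤ g.natDegree := by
  have hsub : s ⊆ g.roots.toFinset := fun x hx =>
    Multiset.mem_toFinset.2 (Polynomial.mem_roots'.2 ⟨hg, hs x hx⟩)
  calc s.card ≤ g.roots.toFinset.card := Finset.card_le_card hsub
    _ ≤ Multiset.card g.roots := g.roots.toFinset_card_le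
    _ ≤ g.natDegree := g.card_roots'

/-- Over `F = 𝔽_q` with `q = p^(2h)`, if `a_1, ..., a_t` are `𝔽_p`-linearly
independent elements satisfying `a_i^(p^h) + a_i = 0` and `1 ≤ t ≤ h`, then the
system `y_i^p - y_i = a_i·x^(p^h+1)` (`i = 1, ..., t`) has exactly `p^t·q`
solutions `(x, y_1, ..., y_t) ∈ F^(t+1)`. -/
theorem stmt_7 (p h t : ℕ) [Fact p.Prime] (hh : 1 ≤ h) (ht : 1 ≤ t) (hth : t ≤ h)
    (F : Type*) [Field F] [Fintype F] [DecidableEq F] [Algebra (ZMod p) F]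
    (hcard : Fintype.card F = p ^ (2 * h))
    (a : Fin t → F) (hindep : LinearIndependent (ZMod p) a)
    (haeq : ∀ i, a i ^ p ^ h + a i = 0) :
    Fintype.card {v : F × (Fin t → F) //
        ∀ i, v.2 i ^ p - v.2 i = a i * v.1 ^ (p ^ h + 1)}
      = p ^ t * p ^ (2 * h) := by
  classical
  have hp : p.Prime := Fact.out
  have hp1 : 1 < p := hp.one_lt
  haveI : CharP F p := charP_of_injective_ringHom (algebraMap (ZMod p) F).injective p
  -- the Artin–Schreier map
  let f : F →ₗ[ZMod p] F :=
    { toFun := fun y => y ^ p - y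
      map_add' := fun x y => by
        show (x + y) ^ p - (x + y) = (x ^ p - x) + (y ^ p - y)
        rw [add_pow_char]; ring
      map_smul' := fun c y => by
        simp only [RingHom.id_apply, Algebra.smul_def, mul_pow, ← map_pow, ZMod.pow_card]
        ring }
  -- the trace-like map
  let T : F →ₗ[ZMod p] F :=
    { toFun := fun z => ∑ j ∈ Finset.range (2 * h), z ^ p ^ j
      map_add' := fun x y => by
        simp only [add_pow_char_pow, Finset.sum_add_distrib]
      map_smul' := fun c z => by
        simp only [RingHom.id_apply, Algebra.smul_def, mul_pow, ← map_pow, ZMod.pow_card_pow,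
          Finset.mul_sum] }
  have hfapp : ∀ y : F, f y = y ^ p - y := fun y => rfl
  have hTapp : ∀ z : F, T z = ∑ j ∈ Finset.range (2 * h), z ^ p ^ j := fun z => rfl
  -- kernel of f has cardinality p
  have hkerf : Fintype.card (LinearMap.ker f) = p := by
    have hle : Fintype.card (LinearMap.ker f) ≤ p := by
      have hXp : (X ^ p - X : F[X]) ≠ 0 := by
        intro hzero
        have := congrArg (fun g => Polynomial.coeff g p) hzero
        simp [Polynomial.coeff_X_pow, Polynomial.coeff_X, hp1.ne] at this
      have hdeg : (X ^ p - X : F[X]).natDegree ≤ p := by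
        calc (X ^ p - X : F[X]).natDegree
            ≤ max (X ^ p : F[X]).natDegree (X : F[X]).natDegree := natDegree_sub_le _ _
          _ ≤ p := by simp [Polynomial.natDegree_X_pow, hp.one_lt.le]
      have := finset_card_le_natDegree hXp (s := (LinearMap.ker f : Set F).toFinset)
        (fun x hx => by
          have hx' : x ∈ LinearMap.ker f := by simpa using hx
          have : x ^ p - x = 0 := hx'
          simp [Polynomial.IsRoot, this])
      rw [Set.toFinset_card] at this
      exact this.trans hdeg
    have hge : p ≤ Fintype.card (LinearMap.ker f) := by
      have hinj : Function.Injective (fun c : ZMod p =>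
          (⟨algebraMap (ZMod p) F c, by
            simp only [LinearMap.mem_ker, hfapp, ← map_pow, ZMod.pow_card, sub_self]⟩ :
            LinearMap.ker f)) := by
        intro c₁ c₂ hc
        have := congrArg Subtype.val hc
        exact (algebraMap (ZMod p) F).injective this
      simpa [ZMod.card] using Fintype.card_le_of_injective _ hinj
    omega
  -- finrank bookkeeping
  have hfinF : Module.finrank (ZMod p) F = 2 * h := by
    have := Module.card_eq_pow_finrank (K := ZMod p) (V := F)
    rw [ZMod.card, hcard] at this
    exact (Nat.pow_right_injective hp.two_le this.symm)
  have hfinker : Module.finrank (ZMod p) (LinearMap.ker f) = 1 := by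
    have := Module.card_eq_pow_finrank (K := ZMod p) (V := LinearMap.ker f)
    rw [ZMod.card, hkerf] at this
    have : p ^ 1 = p ^ Module.finrank (ZMod p) (LinearMap.ker f) := by simpa using this
    exact (Nat.pow_right_injective hp.two_le this).symm
  have hfinrange : Module.finrank (ZMod p) (LinearMap.range f) = 2 * h - 1 := by
    have := LinearMap.finrank_range_add_finrank_ker f
    rw [hfinF, hfinker] at this
    omega
  have hcardrange : Fintype.card (LinearMap.range f) = p ^ (2 * h - 1) := by
    rw [Module.card_eq_pow_finrank (K := ZMod p) (V := LinearMap.range f), ZMod.card, hfinrange]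
  -- range f ⊆ ker T
  have hsub : (LinearMap.range f : Set F) ⊆ (LinearMap.ker T : Set F) := by
    rintro _ ⟨y, rfl⟩
    have : T (f y) = 0 := by
      rw [hfapp, hTapp]
      have hterm : ∀ j : ℕ, (y ^ p - y) ^ p ^ j = y ^ p ^ (j + 1) - y ^ p ^ j := by
        intro j
        rw [sub_pow_char_pow, ← pow_mul, ← pow_succ']
      calc ∑ j ∈ Finset.range (2 * h), (y ^ p - y) ^ p ^ j
          = ∑ j ∈ Finset.range (2 * h), (y ^ p ^ (j + 1) - y ^ p ^ j) := by
            exact Finset.sum_congr rfl fun j _ => hterm j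
        _ = y ^ p ^ (2 * h) - y ^ p ^ 0 := Finset.sum_range_sub (fun j => y ^ p ^ j) (2 * h)
        _ = 0 := by rw [← hcard, FiniteField.pow_card]; simp
    simpa [LinearMap.mem_ker] using this
  -- card of ker T is at most p^(2h-1)
  have hkerT : Fintype.card (LinearMap.ker T) ≤ p ^ (2 * h - 1) := by
    set P : F[X] := ∑ j ∈ Finset.range (2 * h), X ^ p ^ j with hP
    have hP0 : P ≠ 0 := by
      intro hzero
      have := congrArg (fun g => Polynomial.coeff g 1) hzero
      simp only [hP, Polynomial.finset_sum_coeff, Polynomial.coeff_X_pow,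
        Polynomial.coeff_zero] at this
      rw [Finset.sum_eq_single 0] at this
      · simp at this
      · intro j hj hj0
        have : p ^ j ≠ 1 := by
          have : 1 < p ^ j := Nat.one_lt_pow hj0 hp1
          omega
        simp [Ne.symm this]
      · intro habs
        exact absurd (Finset.mem_range.2 (by omega)) habs
    have hPdeg : P.natDegree ≤ p ^ (2 * h - 1) := by
      apply Polynomial.natDegree_sum_le_of_forall_le
      intro j hj
      rw [Polynomial.natDegree_X_pow]
      exact Nat.pow_le_pow_right hp1.le (by have := Finset.mem_range.1 hj; omega)
    have := finset_card_le_natDegree hP0 (s := (LinearMap.ker T : Set F).toFinset)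
      (fun x hx => by
        have hx' : x ∈ LinearMap.ker T := by simpa using hx
        have hx'' : ∑ j ∈ Finset.range (2 * h), x ^ p ^ j = 0 := hx'
        simp [hP, Polynomial.IsRoot, Polynomial.eval_finset_sum, hx''])
    rw [Set.toFinset_card] at this
    exact this.trans hPdeg
  -- hence range f = ker T as sets
  have hseteq : (LinearMap.range f : Set F) = (LinearMap.ker T : Set F) := by
    apply Set.eq_of_subset_of_card_le hsub
    simp only [SetLike.coe_sort_coe]
    have hk : Nat.card (LinearMap.ker T) ≤ Nat.card (LinearMap.range f) := by
      rw [Nat.card_eq_fintype_card, Nat.card_eq_fintype_card, hcardrange]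
      exact hkerT
    simpa [← Nat.card_eq_fintype_card] using hk
  -- key: each equation with trace-zero rhs has exactly p solutions
  have key : ∀ c : F, c ^ p ^ h + c = 0 → Fintype.card {y : F // y ^ p - y = c} = p := by
    intro c hc
    -- T c = 0
    have hTc : T c = 0 := by
      rw [hTapp]
      have h2h : 2 * h = h + h := by ring
      rw [h2h, Finset.sum_range_add]
      have hneg : ∀ j : ℕ, c ^ p ^ (h + j) = -(c ^ p ^ j) := by
        intro j
        have h1 : c ^ p ^ (h + j) = (c ^ p ^ h) ^ p ^ j := by
          rw [← pow_mul, pow_add]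
        have h2 : c ^ p ^ h = -c := by linear_combination hc
        rw [h1, h2]
        rw [show (-c : F) = 0 - c by ring, sub_pow_char_pow,
          zero_pow (pow_ne_zero _ hp.ne_zero), zero_sub]
      rw [Finset.sum_congr rfl (fun j _ => hneg j)]
      simp
    -- c is in the range of f
    have hcrange : c ∈ LinearMap.range f := by
      have : c ∈ (LinearMap.ker T : Set F) := by simpa [LinearMap.mem_ker] using hTc
      rw [← hseteq] at this
      exact this
    obtain ⟨y₀, hy₀⟩ := hcrange
    have hy₀' : y₀ ^ p - y₀ = c := hy₀
    -- the solution set is a coset of ker f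
    have e : {y : F // y ^ p - y = c} ≃ LinearMap.ker f :=
      { toFun := fun y => ⟨y.1 - y₀, by
          rw [LinearMap.mem_ker, map_sub, hy₀]
          have : f y.1 = c := by rw [hfapp, y.2]
          rw [this, sub_self]⟩
        invFun := fun z => ⟨z.1 + y₀, by
          have : f (z.1 + y₀) = c := by
            rw [map_add, hy₀, z.2, zero_add]
          rw [hfapp] at this
          exact this⟩
        left_inv := fun y => by ext; simp
        right_inv := fun z => by ext; simp }
    rw [Fintype.card_congr e, hkerf]
  -- each right-hand side satisfies the trace condition
  have hrhs : ∀ (i : Fin t) (x : F), (a i * x ^ (p ^ h + 1)) ^ p ^ h + a i * x ^ (p ^ h + 1) = 0 := by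
    intro i x
    have hx : x ^ p ^ (2 * h) = x := by rw [← hcard, FiniteField.pow_card]
    have hpow : (x ^ (p ^ h + 1)) ^ p ^ h = x ^ (p ^ h + 1) := by
      rw [← pow_mul]
      have harith : (p ^ h + 1) * p ^ h = p ^ h + p ^ (2 * h) := by
        rw [add_mul, one_mul, ← pow_add]; ring_nf
      rw [harith, pow_add, hx]
      ring
    have hai : (a i) ^ p ^ h = -(a i) := by linear_combination haeq i
    rw [mul_pow, hpow, hai]
    ring
  -- assemble: the solution space splits as a sigma type over x
  have e : {v : F × (Fin t → F) // ∀ i, v.2 i ^ p - v.2 i = a i * v.1 ^ (p ^ h + 1)} ≃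
      Σ x : F, Π i : Fin t, {y : F // y ^ p - y = a i * x ^ (p ^ h + 1)} :=
    { toFun := fun v => ⟨v.1.1, fun i => ⟨v.1.2 i, v.2 i⟩⟩
      invFun := fun s => ⟨(s.1, fun i => (s.2 i).1), fun i => (s.2 i).2⟩
      left_inv := fun v => rfl
      right_inv := fun s => rfl }
  rw [Fintype.card_congr e, Fintype.card_sigma]
  have hfib : ∀ x : F,
      Fintype.card (Π i : Fin t, {y : F // y ^ p - y = a i * x ^ (p ^ h + 1)}) = p ^ t := by
    intro x
    rw [Fintype.card_pi]
    rw [Finset.prod_congr rfl (fun i _ => key _ (hrhs i x))]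
    simp
  rw [Finset.sum_congr rfl (fun x _ => hfib x)]
  rw [Finset.sum_const, Finset.card_univ, hcard, smul_eq_mul, mul_comm]
end

section
/- Let q = p^{2h} and a ∈ F_q nonzero with a^{p^h} + a = 0. For every x ∈ F_q, the element a·x^{p^h+1} lies in the image of the map y ↦ y^p − y on F_q; i.e., there exists y ∈ F_q with y^p − y = a·x^{p^h+1}. -/
open Polynomial Finset

/-- roots bound -/
lemma aux_roots_ncard {F : Type*} [Field F] (Q : Polynomial F) (hQ : Q ≠ 0) :
    Set.ncard {y : F | Q.eval y = 0} ≤ Q.natDegree := by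
  classical
  have hsub : {y : F | Q.eval y = 0} ⊆ ↑Q.roots.toFinset := by
    intro y hy
    rw [Finset.mem_coe, Multiset.mem_toFinset, mem_roots hQ]
    exact hy
  calc Set.ncard {y : F | Q.eval y = 0} ≤ Set.ncard (↑Q.roots.toFinset : Set F) :=
        Set.ncard_le_ncard hsub (Set.toFinite _)
    _ = Q.roots.toFinset.card := by rw [Set.ncard_coe_finset]
    _ ≤ Multiset.card Q.roots := Multiset.toFinset_card_le _
    _ ≤ Q.natDegree := Q.card_roots'

/-- Over `F = 𝔽_q` with `q = p^(2h)`, if `a ≠ 0` satisfies `a^(p^h) + a = 0`, then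
for every `x ∈ F` the element `a·x^(p^h+1)` is in the image of the Artin–Schreier
map `y ↦ y^p - y`. -/
theorem stmt_8 (p h : ℕ) (hp : p.Prime) (hh : 1 ≤ h)
    (F : Type*) [Field F] [Fintype F]
    (hcard : Fintype.card F = p ^ (2 * h))
    (a : F) (ha : a ≠ 0) (haeq : a ^ p ^ h + a = 0) :
    ∀ x : F, ∃ y : F, y ^ p - y = a * x ^ (p ^ h + 1) := by
  classical
  have hpfact : Fact p.Prime := ⟨hp⟩
  -- characteristic
  have hr : (ringChar F).Prime := CharP.char_is_prime F (ringChar F)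
  obtain ⟨n, hn, hFn⟩ := FiniteField.card F (ringChar F)
  have hrp : ringChar F = p := by
    have hdvd : ringChar F ∣ p ^ (2 * h) := by
      rw [← hcard, hFn]; exact dvd_pow_self _ (by positivity)
    exact (Nat.prime_dvd_prime_iff_eq hr hp).mp (hr.dvd_of_dvd_pow hdvd)
  haveI hchar : CharP F p := hrp ▸ ringChar.charP F
  -- frobenius-power maps as additive homs
  have hq : ∀ z : F, z ^ p ^ (2 * h) = z := by
    intro z; rw [← hcard]; exact FiniteField.pow_card z
  -- Artin-Schreier map
  let φ : F →+ F :=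
    { toFun := fun y => y ^ p - y
      map_zero' := by simp [zero_pow hp.ne_zero]
      map_add' := by
        intro x y
        show (x + y) ^ p - (x + y) = (x ^ p - x) + (y ^ p - y)
        rw [add_pow_char]; ring }
  -- trace map
  let T : F →+ F :=
    { toFun := fun z => ∑ i ∈ Finset.range (2 * h), z ^ p ^ i
      map_zero' := by
        apply Finset.sum_eq_zero
        intro i _; exact zero_pow (pow_ne_zero i hp.ne_zero)
      map_add' := by
        intro x y
        simp_rw [add_pow_char_pow]
        rw [Finset.sum_add_distrib] }
  have hnegpow : ∀ (z : F) (i : ℕ), (-z) ^ p ^ i = -(z ^ p ^ i) := by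
    intro z i
    rw [neg_eq_neg_one_mul z, mul_pow, neg_one_pow_char_pow, neg_one_mul]
  -- range φ ⊆ ker T
  have hrk : ∀ y : F, T (φ y) = 0 := by
    intro y
    have : T (φ y) = T (y ^ p) - T y := map_sub T _ _
    rw [this]
    show (∑ i ∈ Finset.range (2 * h), (y ^ p) ^ p ^ i)
      - (∑ i ∈ Finset.range (2 * h), y ^ p ^ i) = 0
    have h1 : ∀ i, (y ^ p) ^ p ^ i = y ^ p ^ (i + 1) := by
      intro i; rw [← pow_mul, pow_succ, mul_comm (p ^ i) p]
    simp_rw [h1]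
    rw [← Finset.sum_sub_distrib, Finset.sum_range_sub (fun i => y ^ p ^ i)]
    simp [hq y]
  -- card of ker φ ≤ p
  have φdef : ∀ y : F, φ y = y ^ p - y := fun _ => rfl
  have Tdef : ∀ z : F, T z = ∑ i ∈ Finset.range (2 * h), z ^ p ^ i := fun _ => rfl
  have hkerφ : Set.ncard {y : F | φ y = 0} ≤ p := by
    have hdeg : (X ^ p - X : F[X]).natDegree = p := by
      rw [natDegree_sub_eq_left_of_natDegree_lt] <;>
        simp [natDegree_X_pow, hp.one_lt]
    have hne : (X ^ p - X : F[X]) ≠ 0 := fun hc => hp.ne_zero (by simpa [hc] using hdeg.symm)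
    have hb := aux_roots_ncard (F := F) (X ^ p - X) hne
    rw [hdeg] at hb
    have hsets : {y : F | φ y = 0} = {y : F | (X ^ p - X : F[X]).eval y = 0} := by
      ext y; simp [φdef]
    rw [hsets]; exact hb
  -- card of ker T ≤ p ^ (2h - 1)
  have hkerT : Set.ncard {z : F | T z = 0} ≤ p ^ (2 * h - 1) := by
    set Q : F[X] := ∑ i ∈ Finset.range (2 * h), X ^ p ^ i with hQdef
    have hQeval : ∀ z : F, Q.eval z = T z := by
      intro z; simp [hQdef, eval_finset_sum, Tdef]
    have hQne : Q ≠ 0 := by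
      intro hc
      have hco := congrArg (fun Q => Polynomial.coeff Q (p ^ (2 * h - 1))) hc
      simp only [hQdef, finset_sum_coeff, coeff_X_pow, coeff_zero] at hco
      rw [Finset.sum_eq_single (2 * h - 1)] at hco
      · simp at hco
      · intro i hi hne
        rw [if_neg]
        intro hpe
        exact hne (Nat.pow_right_injective hp.two_le hpe.symm)
      · intro hni
        exfalso; apply hni
        simp only [Finset.mem_range]; omega
    have hQdeg : Q.natDegree ≤ p ^ (2 * h - 1) := by
      apply natDegree_sum_le_of_forall_le
      intro i hi
      rw [natDegree_X_pow]
      exact Nat.pow_le_pow_right hp.pos (by simp only [Finset.mem_range] at hi; omega)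
    calc Set.ncard {z : F | T z = 0} = Set.ncard {z : F | Q.eval z = 0} := by
          congr 1; ext z; rw [Set.mem_setOf_eq, Set.mem_setOf_eq, hQeval]
      _ ≤ Q.natDegree := aux_roots_ncard Q hQne
      _ ≤ p ^ (2 * h - 1) := hQdeg
  -- counting: card range φ ≥ p^(2h-1)
  have hkerφ_pos : 0 < Set.ncard {y : F | φ y = 0} := by
    rw [Set.ncard_pos (Set.toFinite _)]
    exact ⟨0, by simp [φdef, zero_pow hp.ne_zero]⟩
  have hcount : Set.ncard (Set.range φ) * Set.ncard {y : F | φ y = 0} = p ^ (2 * h) := by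
    have h1 : Nat.card F = Nat.card (F ⧸ φ.ker) * Nat.card φ.ker :=
      AddSubgroup.card_eq_card_quotient_mul_card_addSubgroup φ.ker
    have h2 : Nat.card (F ⧸ φ.ker) = Nat.card φ.range :=
      Nat.card_congr (QuotientAddGroup.quotientKerEquivRange φ).toEquiv
    have h3 : Nat.card F = p ^ (2 * h) := by rw [Nat.card_eq_fintype_card, hcard]
    rw [h2, h3] at h1
    have hksets : {y : F | φ y = 0} = (φ.ker : Set F) := by
      ext y; simp [AddMonoidHom.mem_ker]
    have hrsets : Set.range ⇑φ = (φ.range : Set F) := (AddMonoidHom.coe_range φ).symm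
    rw [hksets, hrsets, ← Nat.card_coe_set_eq, ← Nat.card_coe_set_eq]
    exact h1.symm
  have hrange_ge : p ^ (2 * h - 1) ≤ Set.ncard (Set.range φ) := by
    by_contra hlt
    push_neg at hlt
    have : Set.ncard (Set.range φ) * Set.ncard {y : F | φ y = 0} <
        p ^ (2 * h - 1) * p := by
      calc Set.ncard (Set.range φ) * Set.ncard {y : F | φ y = 0}
          ≤ Set.ncard (Set.range φ) * p := Nat.mul_le_mul_left _ hkerφ
        _ < p ^ (2 * h - 1) * p := (Nat.mul_lt_mul_right hp.pos).mpr hlt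
    rw [hcount, ← pow_succ] at this
    have : 2 * h < 2 * h - 1 + 1 := Nat.pow_lt_pow_iff_right hp.one_lt |>.mp this
    omega
  -- range φ = ker T
  have hsubset : Set.range φ ⊆ {z : F | T z = 0} := by
    rintro _ ⟨y, rfl⟩; exact hrk y
  have heq : Set.range φ = {z : F | T z = 0} :=
    Set.eq_of_subset_of_ncard_le hsubset (le_trans hkerT hrange_ge) (Set.toFinite _)
  -- finish
  intro x
  set z : F := a * x ^ (p ^ h + 1) with hz
  have hzh : z ^ p ^ h = -z := by
    rw [hz, mul_pow, ← pow_mul]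
    have haeq' : a ^ p ^ h = -a := by linear_combination haeq
    rw [haeq']
    have : (p ^ h + 1) * p ^ h = p ^ (2 * h) + p ^ h := by ring
    rw [this, pow_add, hq x]
    ring
  have hTz : T z = 0 := by
    rw [Tdef]
    rw [two_mul, Finset.sum_range_add]
    have : ∀ i, z ^ p ^ (h + i) = -(z ^ p ^ i) := by
      intro i
      rw [pow_add, pow_mul, hzh, hnegpow]
    simp_rw [this]
    simp
  have hzmem : z ∈ Set.range ⇑φ := by rw [heq]; exact hTz
  obtain ⟨y, hy⟩ := hzmem
  exact ⟨y, hy⟩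
end
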